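/- arXiv:1408.5448 — 2 statements merged into one kernel-verified Lean document; each statement's English description precedes it below -/
import Mathlib

section
/- Let n ≥ 1 lines in bounded general position, with a new line l added in general position, and let e be one of the new edges on l (a segment of l between two consecutive intersection points with the old lines). Then e crosses the interior of a bounded face of the old arrangement if and only if in the new arrangement e lies on the boundary of exactly two bounded faces; otherwise e lies on the boundary of exactly one bounded face of the new arrangement. -/
open Set

/-- A subset of the plane `ℂ ≅ ℝ²` is an (affine, real) line. -/
def IsLine (l : Set ℂ) : Prop :=
  ∃ a d : ℂ, d ≠ 0 ∧ l = {z : ℂ | ∃ t : ℝ, z = a + t • d}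

/-- `n` lines in the plane in (bounded) general position: each set is a line,
the lines are pairwise distinct, every two distinct lines meet in exactly one
point (no two are parallel), and no three distinct lines are concurrent.  All
intersections automatically lie in the affine plane. -/
def GenPos {n : ℕ} (ℓ : Fin n → Set ℂ) : Prop :=
  (∀ i, IsLine (ℓ i)) ∧ Function.Injective ℓ ∧
  (∀ i j, i ≠ j → ∃! p : ℂ, p ∈ ℓ i ∧ p ∈ ℓ j) ∧
  (∀ i j k : Fin n, i ≠ j → j ≠ k → i ≠ k →
    ∀ p : ℂ, ¬ (p ∈ ℓ i ∧ p ∈ ℓ j ∧ p ∈ ℓ k))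

/-- The vertices of the arrangement: points lying on at least two of the lines. -/
def Verts {n : ℕ} (ℓ : Fin n → Set ℂ) : Set ℂ :=
  {p : ℂ | ∃ i j, i ≠ j ∧ p ∈ ℓ i ∧ p ∈ ℓ j}

/-- An edge of the arrangement: a closed segment of one of the lines between two
vertices, containing no further vertex in its interior. -/
def IsEdge {n : ℕ} (ℓ : Fin n → Set ℂ) (e : Set ℂ) : Prop :=
  ∃ i : Fin n, ∃ v w : ℂ, v ≠ w ∧ v ∈ Verts ℓ ∧ w ∈ Verts ℓ ∧
    v ∈ ℓ i ∧ w ∈ ℓ i ∧ e = segment ℝ v w ∧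
    ∀ u ∈ Verts ℓ, u ∈ segment ℝ v w → u = v ∨ u = w

/-- A compact convex nonempty region whose boundary is a union of edges of the
arrangement belonging to pairwise distinct lines. -/
def PreAlcove {n : ℕ} (ℓ : Fin n → Set ℂ) (V : Set ℂ) : Prop :=
  IsCompact V ∧ Convex ℝ V ∧ V.Nonempty ∧
  ∃ E : Set (Set ℂ), (∀ e ∈ E, IsEdge ℓ e) ∧ frontier V = ⋃₀ E ∧
    ∀ e₁ ∈ E, ∀ e₂ ∈ E, ∀ i : Fin n, e₁ ⊆ ℓ i → e₂ ⊆ ℓ i → e₁ = e₂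

/-- An alcove: a `PreAlcove` containing no proper subset which is again a
`PreAlcove` (minimality). -/
def IsAlcove {n : ℕ} (ℓ : Fin n → Set ℂ) (V : Set ℂ) : Prop :=
  PreAlcove ℓ V ∧ ∀ W : Set ℂ, W ⊆ V → PreAlcove ℓ W → W = V

/-- A bounded face of the arrangement: a bounded connected component of the
complement of the union of the lines. -/
def IsBoundedFace {n : ℕ} (ℓ : Fin n → Set ℂ) (F : Set ℂ) : Prop :=
  ∃ x : ℂ, x ∉ (⋃ i, ℓ i) ∧ F = connectedComponentIn (⋃ i, ℓ i)ᶜ x ∧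
    Bornology.IsBounded F

open Bornology Filter Topology

/-!
Write each line as a level set `ψ j = c j` of a real linear functional on `ℂ`. The faces of an
arrangement are then its nonempty sign cells `{z | ∀ j, 0 < (ψ j z - c j) * σ j}`: they are open
and convex, and unbounded exactly when their recession cone `{d | ∀ j, 0 ≤ ψ j d * σ j}` is
nonzero. The interior of the edge `e = [v, w]` lies in one old cell `G`, and the new faces having
`e` on their boundary are the two halves of `G` on either side of the new line.

If `G` is bounded, so are both halves. Otherwise `G` has a recession direction `d`, and `d` is
not parallel to the new line: following `d` from the midpoint of `e` along the new line would
reach `v` or `w`, which lie on old lines. So `d` makes one half unbounded. The other half is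
bounded: recession directions on both sides would combine to a nonzero one parallel to the new
line, since the recession cone is salient (the old lines through `v` and `w` cross).
-/

theorem mul_pos_of_mul_pos_of_mul_pos {a b c : ℝ} (hab : 0 < a * b) (hbc : 0 < b * c) :
    0 < a * c := by
  nlinarith [mul_pos hab hbc, sq_nonneg b]

theorem exists_pos_add_smul_eq_of_mem_openSegment {𝕜 V : Type*} [Field 𝕜] [LinearOrder 𝕜]
    [IsStrictOrderedRing 𝕜] [AddCommGroup V] [Module 𝕜 V] {p v w : V}
    (hp : p ∈ openSegment 𝕜 v w) {s : 𝕜} (hs : s ≠ 0) :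
    ∃ r : 𝕜, 0 < r ∧ (p + r • s • (w - v) = v ∨ p + r • s • (w - v) = w) := by
  obtain ⟨a, b, ha, hb, hab, rfl⟩ := hp
  rcases hs.lt_or_gt with hs | hs
  · refine ⟨-b / s, div_pos_of_neg_of_neg (neg_neg_of_pos hb) hs, Or.inl ?_⟩
    rw [smul_smul, div_mul_cancel₀ _ hs.ne]
    linear_combination (norm := module) hab • v
  · refine ⟨a / s, div_pos ha hs, Or.inr ?_⟩
    rw [smul_smul, div_mul_cancel₀ _ hs.ne']
    linear_combination (norm := module) hab • w

theorem eq_zero_of_existsUnique {E : Type*} [AddCommGroup E] [Module ℝ E] {φ₁ φ₂ : E →ₗ[ℝ] ℝ}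
    {c₁ c₂ : ℝ} (h : ∃! q, φ₁ q = c₁ ∧ φ₂ q = c₂) {d : E} (h₁ : φ₁ d = 0) (h₂ : φ₂ d = 0) :
    d = 0 := by
  obtain ⟨q, hq, huniq⟩ := h
  simpa using huniq (q + d) ⟨by simp [h₁, hq.1], by simp [h₂, hq.2]⟩

/-- Otherwise a positive combination of a vector with `0 < φ` and one with `φ < 0` would be a
nonzero vector of `K` in `ker φ`. -/
theorem ConvexCone.Salient.map_nonneg_of_map_pos {E : Type*} [AddCommGroup E] [Module ℝ E]
    {K : ConvexCone ℝ E} (hK : K.Salient) {φ : E →ₗ[ℝ] ℝ} (hker : ∀ d ∈ K, φ d = 0 → d = 0)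
    {d₁ d : E} (hd₁ : d₁ ∈ K) (h₁ : 0 < φ d₁) (hd : d ∈ K) : 0 ≤ φ d := by
  by_contra! h
  have hu := hker _ (K.add_mem (K.smul_mem (neg_pos.2 h) hd₁) (K.smul_mem h₁ hd))
    (by simp only [map_add, map_smul, smul_eq_mul]; ring)
  have hneg : -d = (-φ d / φ d₁) • d₁ := by
    apply smul_right_injective E h₁.ne'
    simp only [smul_smul, mul_div_cancel₀ _ h₁.ne']
    linear_combination (norm := module) -hu
  exact hK d hd (by rintro rfl; simp at h) (hneg ▸ K.smul_mem (div_pos (neg_pos.2 h) h₁) hd₁)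

theorem ncard_sep_pair_of_and {α : Type*} {A B : α} (hAB : A ≠ B) {P : α → Prop}
    (h : P A ∧ P B) : {x | (x = A ∨ x = B) ∧ P x}.ncard = 2 := by
  rw [← ncard_pair hAB]
  congr 1
  ext x
  constructor
  · exact And.left
  · rintro (rfl | rfl)
    exacts [⟨Or.inl rfl, h.1⟩, ⟨Or.inr rfl, h.2⟩]

theorem ncard_sep_pair_of_xor {α : Type*} {A B : α} {P : α → Prop} (h : Xor (P A) (P B)) :
    {x | (x = A ∨ x = B) ∧ P x}.ncard = 1 := by
  rcases h with ⟨hA, hB⟩ | ⟨hB, hA⟩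
  · exact ncard_eq_one.2 ⟨A, by ext x; aesop⟩
  · exact ncard_eq_one.2 ⟨B, by ext x; aesop⟩

section Normed

variable {E : Type*} [NormedAddCommGroup E] [NormedSpace ℝ E] {x d : E}

theorem not_isBounded_of_forall_add_smul_mem {s : Set E} (hd : d ≠ 0)
    (h : ∀ t : ℝ, 0 ≤ t → x + t • d ∈ s) : ¬IsBounded s := by
  intro hb
  obtain ⟨C, hC⟩ := isBounded_iff_forall_norm_le.1 hb
  have ht : 0 ≤ (|C| + ‖x‖ + 1) / ‖d‖ := by positivity
  have := norm_sub_le (x + ((|C| + ‖x‖ + 1) / ‖d‖) • d) x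
  rw [add_sub_cancel_left, norm_smul, Real.norm_of_nonneg ht,
    div_mul_cancel₀ _ (norm_ne_zero_iff.2 hd)] at this
  linarith [hC _ (h _ ht), le_abs_self C]

/-- The direction is a limit point of the unit vectors pointing from `x` to ever farther points
of `s`. -/
theorem Convex.exists_forall_add_smul_mem_closure [FiniteDimensional ℝ E] {s : Set E}
    (hs : Convex ℝ s) (hb : ¬IsBounded s) (hx : x ∈ s) :
    ∃ d : E, d ≠ 0 ∧ ∀ t : ℝ, 0 ≤ t → x + t • d ∈ closure s := by
  have hfar : ∀ k : ℕ, ∃ y ∈ s, (k : ℝ) + 1 ≤ ‖y - x‖ := fun k => by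
    by_contra! hk
    refine hb ((Metric.isBounded_closedBall (x := x) (r := k + 1)).subset fun y hy => ?_)
    rw [Metric.mem_closedBall, dist_eq_norm]
    exact (hk y hy).le
  choose y hys hy using hfar
  have hpos : ∀ k, 0 < ‖y k - x‖ := fun k => by linarith [hy k, (Nat.cast_nonneg k : (0:ℝ) ≤ k)]
  obtain ⟨d, hd, φ, hφ, hlim⟩ := (isCompact_sphere (0 : E) 1).tendsto_subseq
    (x := fun k => ‖y k - x‖⁻¹ • (y k - x)) fun k => by simp [norm_smul, (hpos k).ne']
  refine ⟨d, fun h => by simp [h] at hd, fun t ht => ?_⟩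
  refine mem_closure_of_tendsto (tendsto_const_nhds.add (hlim.const_smul t)) ?_
  filter_upwards [eventually_ge_atTop ⌈t⌉₊] with k hk
  have htk : t ≤ ‖y (φ k) - x‖ := by
    have : (k : ℝ) ≤ φ k := by exact_mod_cast hφ.le_apply
    linarith [Nat.le_ceil t, hy (φ k), (Nat.cast_le.2 hk : (⌈t⌉₊ : ℝ) ≤ k)]
  simp only [Function.comp_apply, smul_smul]
  exact hs.add_smul_sub_mem hx (hys _)
    ⟨by positivity, by rw [mul_inv_le_iff₀ (hpos _), one_mul]; exact htk⟩

theorem segment_subset_frontier_inter {U : Set E} (hU : IsOpen U) {φ : E →L[ℝ] ℝ} {c s : ℝ}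
    {ν v w : E} (hν : φ ν = 1) (hs : s ≠ 0) (hvw : openSegment ℝ v w ⊆ U)
    (hφ : segment ℝ v w ⊆ {z | φ z = c}) :
    segment ℝ v w ⊆ frontier (U ∩ {z | 0 < (φ z - c) * s}) := by
  have hcl : openSegment ℝ v w ⊆ closure (U ∩ {z | 0 < (φ z - c) * s}) := fun x hx => by
    refine hU.inter_closure ⟨hvw hx, ?_⟩
    have hxc : φ x = c := hφ (openSegment_subset_segment _ _ _ hx)
    have hlim : Tendsto (fun t : ℝ => x + (t * s) • ν) (𝓝[>] 0) (𝓝 x) :=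
      (Continuous.tendsto' (by fun_prop) 0 x (by simp)).mono_left nhdsWithin_le_nhds
    refine mem_closure_of_tendsto hlim ?_
    filter_upwards [self_mem_nhdsWithin] with t (ht : 0 < t)
    simp only [map_add, map_smul, hxc, hν, smul_eq_mul]
    nlinarith [mul_pos ht (mul_self_pos.2 hs)]
  rw [(hU.inter (isOpen_lt continuous_const (by fun_prop))).frontier_eq]
  refine fun x hx => ⟨?_, fun hxS => ?_⟩
  · rw [← closure_openSegment] at hx
    exact closure_minimal hcl isClosed_closure hx
  · simpa [show φ x = c from hφ hx] using hxS.2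

end Normed

section SignCells

variable {E ι : Type*} [NormedAddCommGroup E] [NormedSpace ℝ E]

def signCell (ψ : ι → E →L[ℝ] ℝ) (c σ : ι → ℝ) : Set E :=
  {z | ∀ j, 0 < (ψ j z - c j) * σ j}

def signCone (ψ : ι → E →L[ℝ] ℝ) (σ : ι → ℝ) : ConvexCone ℝ E where
  carrier := {d | ∀ j, 0 ≤ ψ j d * σ j}
  smul_mem' r hr d hd j := by simpa [mul_assoc] using mul_nonneg hr.le (hd j)
  add_mem' d hd d' hd' j := by simpa [add_mul] using add_nonneg (hd j) (hd' j)

variable {ψ : ι → E →L[ℝ] ℝ} {c σ τ : ι → ℝ} {x z d : E}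

theorem mem_signCone : d ∈ signCone ψ σ ↔ ∀ j, 0 ≤ ψ j d * σ j := Iff.rfl

theorem ne_zero_of_mem_signCell (hx : x ∈ signCell ψ c σ) (j : ι) : σ j ≠ 0 :=
  right_ne_zero_of_mul (hx j).ne'

theorem mem_signCell_self (hx : ∀ j, ψ j x ≠ c j) : x ∈ signCell ψ c (fun j => ψ j x - c j) :=
  fun j => mul_self_pos.2 (sub_ne_zero.2 (hx j))

theorem notMem_signCell_of_eq {j : ι} (hx : ψ j x = c j) : x ∉ signCell ψ c σ := fun h => by
  simpa [hx] using h j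

theorem signCell_subset_compl : signCell ψ c σ ⊆ (⋃ j, {z | ψ j z = c j})ᶜ := by
  simp only [subset_def, mem_compl_iff, mem_iUnion, not_exists]
  exact fun z hz j hj => notMem_signCell_of_eq hj hz

theorem isOpen_signCell [Finite ι] : IsOpen (signCell ψ c σ) := by
  simp only [signCell, ofPred_forall]
  exact isOpen_iInter_of_finite fun j => isOpen_lt continuous_const (by fun_prop)

theorem convex_signCell : Convex ℝ (signCell ψ c σ) := by
  simp only [signCell, ofPred_forall]
  refine convex_iInter fun j => ?_
  convert convex_halfSpace_gt (σ j • (ψ j : E →ₗ[ℝ] ℝ)).isLinear (c j * σ j) using 3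
  simp [sub_mul, mul_comm (σ j)]

theorem closure_signCell_subset :
    closure (signCell ψ c σ) ⊆ {z | ∀ j, 0 ≤ (ψ j z - c j) * σ j} :=
  closure_minimal (fun z hz j => (hz j).le) <| by
    simp only [ofPred_forall]
    exact isClosed_iInter fun j => isClosed_le continuous_const (by fun_prop)

theorem signCell_congr (h : ∀ j, 0 < σ j * τ j) : signCell ψ c σ = signCell ψ c τ := by
  have key : ∀ {σ τ : ι → ℝ}, (∀ j, 0 < σ j * τ j) → signCell ψ c σ ⊆ signCell ψ c τ :=
    fun h z hz j => mul_pos_of_mul_pos_of_mul_pos (hz j) (h j)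
  exact (key h).antisymm (key fun j => mul_comm (σ j) (τ j) ▸ h j)

theorem signCell_eq_of_mem (hσ : x ∈ signCell ψ c σ) (hτ : x ∈ signCell ψ c τ) :
    signCell ψ c σ = signCell ψ c τ :=
  signCell_congr fun j => mul_pos_of_mul_pos_of_mul_pos (by rw [mul_comm]; exact hσ j) (hτ j)

/-- On the component, `ψ j - c j` keeps the sign it has at `x`: its image is an interval
avoiding `0`. -/
theorem connectedComponentIn_eq_signCell [Finite ι] (hx : x ∈ signCell ψ c σ) :
    connectedComponentIn (⋃ j, {z | ψ j z = c j})ᶜ x = signCell ψ c σ := by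
  set C := connectedComponentIn (⋃ j, {z | ψ j z = c j})ᶜ x
  refine subset_antisymm (fun z hz j => ?_) <|
    convex_signCell.isPreconnected.subset_connectedComponentIn hx signCell_subset_compl
  have hxC : x ∈ C := mem_connectedComponentIn (signCell_subset_compl hx)
  have hf : ContinuousOn (fun y => ψ j y - c j) C := by fun_prop
  refine mul_pos_of_mul_pos_of_mul_pos (not_le.1 fun hle => ?_) (hx j)
  obtain ⟨y, hy, hy0⟩ : (0 : ℝ) ∈ (fun y => ψ j y - c j) '' C := by
    rcases mul_nonpos_iff.1 hle with ⟨hz0, hx0⟩ | ⟨hz0, hx0⟩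
    · exact isPreconnected_connectedComponentIn.intermediate_value hxC hz hf ⟨hx0, hz0⟩
    · exact isPreconnected_connectedComponentIn.intermediate_value hz hxC hf ⟨hz0, hx0⟩
  exact connectedComponentIn_subset _ _ hy (mem_iUnion.2 ⟨j, sub_eq_zero.1 hy0⟩)

theorem IsPreconnected.subset_signCell [Finite ι] {s : Set E} (hs : IsPreconnected s)
    (hx : x ∈ s) (hsψ : ∀ y ∈ s, ∀ j, ψ j y ≠ c j) :
    s ⊆ signCell ψ c (fun j => ψ j x - c j) := by
  rw [← connectedComponentIn_eq_signCell (mem_signCell_self (hsψ x hx))]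
  refine hs.subset_connectedComponentIn hx fun y hy => ?_
  simpa using hsψ y hy

theorem add_smul_mem_signCell (hz : z ∈ signCell ψ c σ) (hd : d ∈ signCone ψ σ) {t : ℝ}
    (ht : 0 ≤ t) : z + t • d ∈ signCell ψ c σ := fun j => by
  have h := mul_nonneg ht (hd j)
  simp only [map_add, map_smul, smul_eq_mul]
  nlinarith [hz j]

theorem smul_sub_notMem_signCone {p v w : E} (hp : p ∈ openSegment ℝ v w)
    (hpσ : p ∈ signCell ψ c σ) (hv : v ∉ signCell ψ c σ) (hw : w ∉ signCell ψ c σ) {s : ℝ}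
    (hs : s ≠ 0) : s • (w - v) ∉ signCone ψ σ := fun hd => by
  obtain ⟨r, hr, h | h⟩ := exists_pos_add_smul_eq_of_mem_openSegment hp hs
  exacts [hv (h ▸ add_smul_mem_signCell hpσ hd hr.le), hw (h ▸ add_smul_mem_signCell hpσ hd hr.le)]

theorem mem_signCone_of_forall_add_smul_mem_closure
    (h : ∀ t : ℝ, 0 ≤ t → z + t • d ∈ closure (signCell ψ c σ)) : d ∈ signCone ψ σ := by
  intro j
  by_contra! hneg
  set A := (ψ j z - c j) * σ j
  have ht : 0 ≤ (|A| + 1) / -(ψ j d * σ j) := div_nonneg (by positivity) (by linarith)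
  have hz := closure_signCell_subset (h _ ht) j
  have hmul : (|A| + 1) / -(ψ j d * σ j) * (ψ j d * σ j) = -(|A| + 1) := by
    rw [div_neg, neg_mul, div_mul_cancel₀ _ hneg.ne]
  simp only [map_add, map_smul, smul_eq_mul] at hz
  nlinarith [le_abs_self A]

theorem exists_mem_signCone_of_not_isBounded [FiniteDimensional ℝ E]
    (hb : ¬IsBounded (signCell ψ c σ)) : ∃ d ∈ signCone ψ σ, d ≠ 0 := by
  obtain ⟨x, hx⟩ := nonempty_of_not_isBounded hb
  obtain ⟨d, hd, hray⟩ := convex_signCell.exists_forall_add_smul_mem_closure hb hx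
  exact ⟨d, mem_signCone_of_forall_add_smul_mem_closure hray, hd⟩

theorem not_isBounded_signCell (hx : x ∈ signCell ψ c σ) (hd : d ∈ signCone ψ σ) (hd0 : d ≠ 0) :
    ¬IsBounded (signCell ψ c σ) :=
  not_isBounded_of_forall_add_smul_mem hd0 fun _ ht => add_smul_mem_signCell hx hd ht

theorem signCone_salient (hσ : ∀ j, σ j ≠ 0) (hψ : ∀ d, (∀ j, ψ j d = 0) → d = 0) :
    (signCone ψ σ).Salient := by
  intro d hd hd0 hneg
  refine hd0 (hψ d fun j => ?_)
  have h := hneg j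
  rw [map_neg, neg_mul, neg_nonneg] at h
  exact (mul_eq_zero.1 (le_antisymm h (hd j))).resolve_right (hσ j)

end SignCells

section NewHyperplane

variable {E : Type*} [NormedAddCommGroup E] [NormedSpace ℝ E] {n : ℕ}
  {ψ : Fin (n + 1) → E →L[ℝ] ℝ} {c : Fin (n + 1) → ℝ} {σ : Fin n → ℝ} {ν v w : E}

theorem signCell_snoc (s : ℝ) :
    signCell ψ c (Fin.snoc σ s) = signCell (fun i => ψ i.castSucc) (fun i => c i.castSucc) σ ∩
      {z | 0 < (ψ (Fin.last n) z - c (Fin.last n)) * s} := by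
  ext z
  simp [signCell, Fin.forall_fin_succ']

theorem signCell_snoc_subset (s : ℝ) :
    signCell ψ c (Fin.snoc σ s) ⊆ signCell (fun i => ψ i.castSucc) (fun i => c i.castSucc) σ := by
  rw [signCell_snoc]
  exact inter_subset_left

theorem mem_signCone_snoc {s : ℝ} {d : E} :
    d ∈ signCone ψ (Fin.snoc σ s) ↔
      d ∈ signCone (fun i => ψ i.castSucc) σ ∧ 0 ≤ ψ (Fin.last n) d * s := by
  simp [mem_signCone, Fin.forall_fin_succ']

theorem signCell_snoc_one_ne (h : (signCell ψ c (Fin.snoc σ 1)).Nonempty) :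
    signCell ψ c (Fin.snoc σ 1) ≠ signCell ψ c (Fin.snoc σ (-1)) := by
  obtain ⟨x, hx⟩ := h
  intro heq
  have h₁ := hx (Fin.last n)
  have h₂ := (heq ▸ hx) (Fin.last n)
  simp only [Fin.snoc_last] at h₁ h₂
  linarith

theorem segment_subset_frontier_signCell_snoc (hν : ψ (Fin.last n) ν = 1)
    (hseg : segment ℝ v w ⊆ {z | ψ (Fin.last n) z = c (Fin.last n)})
    (hG : openSegment ℝ v w ⊆ signCell (fun i => ψ i.castSucc) (fun i => c i.castSucc) σ)
    {s : ℝ} (hs : s ≠ 0) : segment ℝ v w ⊆ frontier (signCell ψ c (Fin.snoc σ s)) := by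
  rw [signCell_snoc]
  exact segment_subset_frontier_inter isOpen_signCell hν hs hG hseg

theorem signCell_snoc_nonempty (hν : ψ (Fin.last n) ν = 1)
    (hseg : segment ℝ v w ⊆ {z | ψ (Fin.last n) z = c (Fin.last n)})
    (hG : openSegment ℝ v w ⊆ signCell (fun i => ψ i.castSucc) (fun i => c i.castSucc) σ)
    {s : ℝ} (hs : s ≠ 0) : (signCell ψ c (Fin.snoc σ s)).Nonempty :=
  closure_nonempty_iff.1 ⟨v, frontier_subset_closure
    (segment_subset_frontier_signCell_snoc hν hseg hG hs (left_mem_segment ℝ v w))⟩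

theorem signCell_eq_snoc_or_of_mem_closure {τ : Fin (n + 1) → ℝ} {p : E}
    (hτ : (signCell ψ c τ).Nonempty) (hp : p ∈ closure (signCell ψ c τ))
    (hpσ : p ∈ signCell (fun i => ψ i.castSucc) (fun i => c i.castSucc) σ) :
    signCell ψ c τ = signCell ψ c (Fin.snoc σ 1) ∨
      signCell ψ c τ = signCell ψ c (Fin.snoc σ (-1)) := by
  obtain ⟨x, hx⟩ := hτ
  have hτ0 := ne_zero_of_mem_signCell hx
  have hold : ∀ i : Fin n, 0 < τ i.castSucc * σ i := fun i => by
    have hp0 : ψ i.castSucc p - c i.castSucc ≠ 0 := left_ne_zero_of_mul (hpσ i).ne'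
    have hpτ := (closure_signCell_subset hp i.castSucc).lt_of_ne (mul_ne_zero hp0 (hτ0 _)).symm
    exact mul_pos_of_mul_pos_of_mul_pos (by rwa [mul_comm] at hpτ) (hpσ i)
  rcases (hτ0 (Fin.last n)).lt_or_gt with hneg | hpos
  · exact Or.inr (signCell_congr (Fin.forall_fin_succ'.2 ⟨by simpa using hold, by simpa⟩))
  · exact Or.inl (signCell_congr (Fin.forall_fin_succ'.2 ⟨by simpa using hold, by simpa⟩))

theorem xor_isBounded_signCell_snoc [FiniteDimensional ℝ E]
    (hker : ∀ d ∈ signCone (fun i => ψ i.castSucc) σ, ψ (Fin.last n) d = 0 → d = 0)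
    (hsal : (signCone (fun i => ψ i.castSucc) σ).Salient)
    (hG : ¬IsBounded (signCell (fun i => ψ i.castSucc) (fun i => c i.castSucc) σ))
    (hne : ∀ s : ℝ, s ≠ 0 → (signCell ψ c (Fin.snoc σ s)).Nonempty) :
    Xor (IsBounded (signCell ψ c (Fin.snoc σ 1)))
      (IsBounded (signCell ψ c (Fin.snoc σ (-1)))) := by
  have hside : ∀ s : ℝ, s ≠ 0 → ¬IsBounded (signCell ψ c (Fin.snoc σ s)) →
      ∃ d ∈ signCone (fun i => ψ i.castSucc) σ, 0 < ψ (Fin.last n) d * s := fun s hs hb => by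
    obtain ⟨d, hd, hd0⟩ := exists_mem_signCone_of_not_isBounded hb
    obtain ⟨hd, hds⟩ := mem_signCone_snoc.1 hd
    exact ⟨d, hd, hds.lt_of_ne (mul_ne_zero ((hker d hd).mt hd0) hs).symm⟩
  have hnotboth : ¬(¬IsBounded (signCell ψ c (Fin.snoc σ 1)) ∧
      ¬IsBounded (signCell ψ c (Fin.snoc σ (-1)))) := fun ⟨h₁, h₂⟩ => by
    obtain ⟨d₁, hd₁, h₁⟩ := hside 1 one_ne_zero h₁
    obtain ⟨d₂, hd₂, h₂⟩ := hside (-1) (by norm_num) h₂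
    have := hsal.map_nonneg_of_map_pos (φ := ψ (Fin.last n)) hker hd₁ (by simpa using h₁) hd₂
    simp only [ContinuousLinearMap.coe_coe] at this
    linarith
  obtain ⟨d, hd, hd0⟩ := exists_mem_signCone_of_not_isBounded hG
  obtain ⟨x₁, hx₁⟩ := hne 1 one_ne_zero
  obtain ⟨x₂, hx₂⟩ := hne (-1) (by norm_num)
  rcases lt_or_gt_of_ne ((hker d hd).mt hd0) with hneg | hpos
  · have hub := not_isBounded_signCell hx₂ (mem_signCone_snoc.2 ⟨hd, by linarith⟩) hd0
    exact Or.inl ⟨not_not.1 fun hb => hnotboth ⟨hb, hub⟩, hub⟩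
  · have hub := not_isBounded_signCell hx₁ (mem_signCone_snoc.2 ⟨hd, by linarith⟩) hd0
    exact Or.inr ⟨not_not.1 fun hb => hnotboth ⟨hub, hb⟩, hub⟩

end NewHyperplane

theorem IsLine.exists_continuousLinearMap {l : Set ℂ} (hl : IsLine l) :
    ∃ (ψ : ℂ →L[ℝ] ℝ) (c : ℝ) (ν : ℂ), ψ ν = 1 ∧ l = {z | ψ z = c} := by
  obtain ⟨a, d, hd, rfl⟩ := hl
  refine ⟨Complex.imCLM.comp (d⁻¹ • ContinuousLinearMap.id ℝ ℂ), (d⁻¹ * a).im, Complex.I * d,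
    ?_, ?_⟩
  · show (d⁻¹ * (Complex.I * d)).im = 1
    rw [mul_left_comm, inv_mul_cancel₀ hd, mul_one, Complex.I_im]
  ext z
  show (∃ t : ℝ, z = a + t • d) ↔ (d⁻¹ * z).im = (d⁻¹ * a).im
  constructor
  · rintro ⟨t, rfl⟩
    rw [Complex.real_smul, mul_add, mul_left_comm, inv_mul_cancel₀ hd, mul_one]
    simp
  · intro h
    refine ⟨(d⁻¹ * (z - a)).re, ?_⟩
    have him : (d⁻¹ * (z - a)).im = 0 := by rw [mul_sub, Complex.sub_im, h, sub_self]
    have : ((d⁻¹ * (z - a)).re : ℂ) = d⁻¹ * (z - a) := Complex.ext (by simp) (by simp [him])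
    rw [Complex.real_smul, this, mul_right_comm, inv_mul_cancel₀ hd, one_mul]
    ring

theorem IsLine.exists_eq_smul_sub {l : Set ℂ} (hl : IsLine l) {v w p d : ℂ} (hv : v ∈ l)
    (hw : w ∈ l) (hvw : v ≠ w) (hp : p ∈ l) (hpd : p + d ∈ l) : ∃ s : ℝ, d = s • (w - v) := by
  obtain ⟨a, e, he, rfl⟩ := hl
  obtain ⟨tv, rfl⟩ := hv
  obtain ⟨tw, rfl⟩ := hw
  obtain ⟨tp, rfl⟩ := hp
  obtain ⟨td, htd⟩ := hpd
  have htvw : tw - tv ≠ 0 := sub_ne_zero.2 fun h => hvw (by rw [h])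
  refine ⟨(td - tp) / (tw - tv), ?_⟩
  rw [show a + tw • e - (a + tv • e) = (tw - tv) • e by module, smul_smul,
    div_mul_cancel₀ _ htvw, eq_sub_of_add_eq' htd]
  module

theorem IsLine.eq_zero_of_mem_signCone {l : Set ℂ} (hl : IsLine l) {φ : ℂ →L[ℝ] ℝ} {c₀ : ℝ}
    (hφ : l = {z | φ z = c₀}) {ι : Type*} {ψ : ι → ℂ →L[ℝ] ℝ} {c σ : ι → ℝ} {v w p d : ℂ}
    (hvw : v ≠ w) (hseg : segment ℝ v w ⊆ l) (hp : p ∈ openSegment ℝ v w)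
    (hpσ : p ∈ signCell ψ c σ) (hv : v ∉ signCell ψ c σ) (hw : w ∉ signCell ψ c σ)
    (hd : d ∈ signCone ψ σ) (hφd : φ d = 0) : d = 0 := by
  have hpl := hseg (openSegment_subset_segment ℝ v w hp)
  have hpdl : p + d ∈ l := by
    rw [hφ] at hpl ⊢
    simpa [hφd] using hpl
  obtain ⟨s, rfl⟩ := hl.exists_eq_smul_sub (hseg (left_mem_segment ℝ v w))
    (hseg (right_mem_segment ℝ v w)) hvw hpl hpdl
  by_contra hs
  exact smul_sub_notMem_signCone hp hpσ hv hw (left_ne_zero_of_smul hs) hd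

theorem isBoundedFace_iff {m : ℕ} {ℓ : Fin m → Set ℂ} {ψ : Fin m → ℂ →L[ℝ] ℝ} {c : Fin m → ℝ}
    (hℓ : ∀ i, ℓ i = {z | ψ i z = c i}) {F : Set ℂ} :
    IsBoundedFace ℓ F ↔ ∃ σ, (signCell ψ c σ).Nonempty ∧ F = signCell ψ c σ ∧ IsBounded F := by
  rw [IsBoundedFace, iUnion_congr hℓ]
  constructor
  · rintro ⟨x, hx, rfl, hb⟩
    have hx' : ∀ j, ψ j x ≠ c j := fun j h => hx (mem_iUnion.2 ⟨j, h⟩)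
    exact ⟨_, ⟨x, mem_signCell_self hx'⟩,
      connectedComponentIn_eq_signCell (mem_signCell_self hx'), hb⟩
  · rintro ⟨σ, ⟨x, hx⟩, rfl, hb⟩
    exact ⟨x, signCell_subset_compl hx, (connectedComponentIn_eq_signCell hx).symm, hb⟩

theorem IsEdge.exists_endpoints {n : ℕ} {ℓ : Fin (n + 1) → Set ℂ} (h : GenPos ℓ) {e : Set ℂ}
    (he : IsEdge ℓ e) (hel : e ⊆ ℓ (Fin.last n)) :
    ∃ (v w : ℂ) (a b : Fin n), v ≠ w ∧ a ≠ b ∧ v ∈ ℓ a.castSucc ∧ w ∈ ℓ b.castSucc ∧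
      e = segment ℝ v w ∧ ∀ x ∈ openSegment ℝ v w, ∀ i : Fin n, x ∉ ℓ i.castSucc := by
  obtain ⟨-, v, w, hvw, hv, hw, -, -, rfl, hgap⟩ := he
  have hold : ∀ x ∈ Verts ℓ, ∃ a : Fin n, x ∈ ℓ a.castSucc := by
    rintro x ⟨i, j, hij, hi, hj⟩
    rcases Fin.eq_castSucc_or_eq_last i with ⟨a, rfl⟩ | rfl
    · exact ⟨a, hi⟩
    · obtain ⟨a, rfl⟩ := Fin.exists_castSucc_eq.2 (Ne.symm hij)
      exact ⟨a, hj⟩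
  obtain ⟨a, ha⟩ := hold v hv
  obtain ⟨b, hb⟩ := hold w hw
  have hvN := hel (left_mem_segment ℝ v w)
  have hwN := hel (right_mem_segment ℝ v w)
  refine ⟨v, w, a, b, hvw, ?_, ha, hb, rfl, fun x hx i hxi => ?_⟩
  · rintro rfl
    obtain ⟨q, -, hq⟩ := h.2.2.1 a.castSucc (Fin.last n) (Fin.castSucc_lt_last a).ne
    exact hvw ((hq v ⟨ha, hvN⟩).trans (hq w ⟨hb, hwN⟩).symm)
  · have hxs := openSegment_subset_segment ℝ v w hx
    rcases hgap x ⟨_, _, (Fin.castSucc_lt_last i).ne, hxi, hel hxs⟩ hxs with rfl | rfl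
    exacts [hvw (left_mem_openSegment_iff.1 hx), hvw (right_mem_openSegment_iff.1 hx)]

theorem exists_isBoundedFace_inter_interior_iff {m : ℕ} {ℓ : Fin m → Set ℂ}
    {ψ : Fin m → ℂ →L[ℝ] ℝ} {c : Fin m → ℝ} (hℓ : ∀ i, ℓ i = {z | ψ i z = c i}) {v w : ℂ}
    {σ : Fin m → ℝ} (hv : v ∈ ⋃ i, ℓ i) (hw : w ∈ ⋃ i, ℓ i)
    (hG : openSegment ℝ v w ⊆ signCell ψ c σ) :
    (∃ F, IsBoundedFace ℓ F ∧ (segment ℝ v w ∩ interior F).Nonempty) ↔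
      IsBounded (signCell ψ c σ) := by
  simp_rw [isBoundedFace_iff hℓ]
  rw [iUnion_congr hℓ] at hv hw
  constructor
  · rintro ⟨_, ⟨τ, -, rfl, hb⟩, x, hx, hxτ⟩
    replace hxτ := interior_subset hxτ
    rw [← insert_endpoints_openSegment] at hx
    rcases hx with rfl | rfl | hx
    · exact absurd hv (signCell_subset_compl hxτ)
    · exact absurd hw (signCell_subset_compl hxτ)
    · rwa [signCell_eq_of_mem (hG hx) hxτ]
  · intro hb
    have hp := hG (midpoint_mem_openSegment v w)
    refine ⟨_, ⟨σ, ⟨_, hp⟩, rfl, hb⟩, _, midpoint_mem_segment v w, ?_⟩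
    rwa [isOpen_signCell.interior_eq]

theorem setOf_isBoundedFace_segment_subset_frontier {n : ℕ} {ℓ : Fin (n + 1) → Set ℂ}
    {ψ : Fin (n + 1) → ℂ →L[ℝ] ℝ} {c : Fin (n + 1) → ℝ} (hℓ : ∀ j, ℓ j = {z | ψ j z = c j})
    {ν : ℂ} (hν : ψ (Fin.last n) ν = 1) {v w : ℂ} {σ : Fin n → ℝ}
    (hseg : segment ℝ v w ⊆ ℓ (Fin.last n))
    (hG : openSegment ℝ v w ⊆ signCell (fun i => ψ i.castSucc) (fun i => c i.castSucc) σ) :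
    {F | IsBoundedFace ℓ F ∧ segment ℝ v w ⊆ frontier F} =
      {F | (F = signCell ψ c (Fin.snoc σ 1) ∨ F = signCell ψ c (Fin.snoc σ (-1))) ∧
        IsBounded F} := by
  rw [hℓ] at hseg
  ext F
  simp only [mem_ofPred_eq, isBoundedFace_iff hℓ]
  constructor
  · rintro ⟨⟨τ, hτ, rfl, hb⟩, hF⟩
    exact ⟨signCell_eq_snoc_or_of_mem_closure hτ
      (frontier_subset_closure (hF (midpoint_mem_segment v w)))
      (hG (midpoint_mem_openSegment v w)), hb⟩
  · rintro ⟨hF, hb⟩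
    obtain ⟨s, hs, rfl⟩ : ∃ s : ℝ, s ≠ 0 ∧ F = signCell ψ c (Fin.snoc σ s) :=
      hF.elim (⟨1, one_ne_zero, ·⟩) (⟨-1, by norm_num, ·⟩)
    exact ⟨⟨_, signCell_snoc_nonempty hν hseg hG hs, rfl, hb⟩,
      segment_subset_frontier_signCell_snoc hν hseg hG hs⟩

theorem new_edge_bounded_faces_general (n : ℕ)
    (ℓ : Fin (n + 1) → Set ℂ) (h : GenPos ℓ)
    (e : Set ℂ) (he : IsEdge ℓ e) (hel : e ⊆ ℓ (Fin.last n)) :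
    ((∃ F : Set ℂ, IsBoundedFace (fun i : Fin n => ℓ i.castSucc) F ∧
        (e ∩ interior F).Nonempty) ↔
      {F : Set ℂ | IsBoundedFace ℓ F ∧ e ⊆ frontier F}.ncard = 2) ∧
    (¬ (∃ F : Set ℂ, IsBoundedFace (fun i : Fin n => ℓ i.castSucc) F ∧
        (e ∩ interior F).Nonempty) →
      {F : Set ℂ | IsBoundedFace ℓ F ∧ e ⊆ frontier F}.ncard = 1) := by
  choose ψ c ν hν hℓ using fun j => (h.1 j).exists_continuousLinearMap
  obtain ⟨v, w, a, b, hvw, hab, hva, hwb, rfl, hgap⟩ := he.exists_endpoints h hel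
  have hp := midpoint_mem_openSegment (𝕜 := ℝ) v w
  set σ : Fin n → ℝ := fun i => ψ i.castSucc (midpoint ℝ v w) - c i.castSucc
  have hG : openSegment ℝ v w ⊆ signCell (fun i => ψ i.castSucc) (fun i => c i.castSucc) σ :=
    (convex_openSegment v w).isPreconnected.subset_signCell hp fun x hx i hxi =>
      hgap x hx i (by rw [hℓ]; exact hxi)
  have hker : ∀ d ∈ signCone (fun i => ψ i.castSucc) σ, ψ (Fin.last n) d = 0 → d = 0 :=
    fun d hd => (h.1 _).eq_zero_of_mem_signCone (hℓ _) hvw hel hp (hG hp)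
      (notMem_signCell_of_eq (j := a) (by rw [hℓ] at hva; exact hva))
      (notMem_signCell_of_eq (j := b) (by rw [hℓ] at hwb; exact hwb)) hd
  have hmeet := h.2.2.1 a.castSucc b.castSucc (Fin.castSucc_injective n |>.ne hab)
  rw [hℓ, hℓ] at hmeet
  have hsal : (signCone (fun i => ψ i.castSucc) σ).Salient :=
    signCone_salient (ne_zero_of_mem_signCell (hG hp)) fun d hd =>
      eq_zero_of_existsUnique (φ₁ := ψ a.castSucc) (φ₂ := ψ b.castSucc) hmeet (hd a) (hd b)
  have hne := fun s (hs : s ≠ 0) => signCell_snoc_nonempty (hν _) (hℓ _ ▸ hel) hG hs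
  rw [exists_isBoundedFace_inter_interior_iff (fun i => hℓ i.castSucc) (mem_iUnion_of_mem a hva)
    (mem_iUnion_of_mem b hwb) hG, setOf_isBoundedFace_segment_subset_frontier hℓ (hν _) hel hG]
  have hone := fun hb => ncard_sep_pair_of_xor (xor_isBounded_signCell_snoc hker hsal hb hne)
  have htwo := fun (hb : IsBounded _) => ncard_sep_pair_of_and
    (signCell_snoc_one_ne (hne 1 one_ne_zero)) ⟨hb.subset (signCell_snoc_subset 1),
      hb.subset (signCell_snoc_subset (-1))⟩
  exact ⟨⟨htwo, fun h2 => by_contra fun hb => by simp [hone hb] at h2⟩, hone⟩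

/-- Let `l = ℓ (Fin.last n)` be a new line added to `n` lines in bounded general
position, and let `e` be a new edge on `l` (a segment of `l` between consecutive
intersection points with the old lines).  Then `e` crosses the interior of a
bounded face of the old arrangement if and only if, in the new arrangement, `e`
lies on the boundary of exactly two bounded faces; otherwise `e` lies on the
boundary of exactly one bounded face of the new arrangement. -/
theorem new_edge_bounded_faces (n : ℕ) (hn : 1 ≤ n)
    (ℓ : Fin (n + 1) → Set ℂ) (h : GenPos ℓ)
    (e : Set ℂ) (he : IsEdge ℓ e) (hel : e ⊆ ℓ (Fin.last n)) :
    ((∃ F : Set ℂ, IsBoundedFace (fun i : Fin n => ℓ i.castSucc) F ∧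
        (e ∩ interior F).Nonempty) ↔
      {F : Set ℂ | IsBoundedFace ℓ F ∧ e ⊆ frontier F}.ncard = 2) ∧
    (¬ (∃ F : Set ℂ, IsBoundedFace (fun i : Fin n => ℓ i.castSucc) F ∧
        (e ∩ interior F).Nonempty) →
      {F : Set ℂ | IsBoundedFace ℓ F ∧ e ⊆ frontier F}.ncard = 1) :=
  new_edge_bounded_faces_general n ℓ h e he hel
end

section
/- Let L be a one-parameter linear system (pencil) of plane curves of degree n over an algebraically closed field, defined by f(x,y;t), whose generic member is irreducible and reduced. Then every one-dimensional irreducible component of the incidence variety F = {(t,z) : z ∈ Sing(C_t)} that dominates L is of the form L × {z₀} for a single point z₀ ∈ ℙ²; i.e., the moving singular points of a generically irreducible pencil are constant (base points of the singularities). -/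
/-!
Along a section `γ(t)` of singular points, `f = g + t h` and its partials `∂ₓf, ∂_yf` vanish at
`(γ(t), t)`, so differentiating `f(γ(t), t) = 0` in `t` leaves only `∂f/∂t = h(γ(t)) = 0`: the
section lies on `g = 0` and `h = 0`, hence on every member of the pencil. Take two distinct
irreducible members `p₁, p₂`. If `p₁ ∤ p₂`, `γ` lies on two curves without common component. If
`p₁ ∣ p₂`, every member is a multiple of `p₁`, so `γ(t)` is a singular point of `p₁` and `γ` lies
on `p₁ = 0` and on a nonzero partial derivative of `p₁`, which `p₁` cannot divide. Either way `γ`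
lies on curves `p = 0`, `q = 0` with `p` irreducible and `p ∤ q`, so a nonzero resultant
`d(x₀) ∈ (p, q)` gives `d(γ₀(t)) = 0` for all `t`; hence `γ₀` is constant, and likewise `γ₁`.
-/

/-- The point `z ∈ 𝔸²` is a singular point of the affine plane curve defined by
the polynomial `p`: the polynomial and both its partial derivatives vanish. -/
def SingAt (p : MvPolynomial (Fin 2) ℂ) (z : Fin 2 → ℂ) : Prop :=
  MvPolynomial.eval z p = 0 ∧
  MvPolynomial.eval z (MvPolynomial.pderiv 0 p) = 0 ∧
  MvPolynomial.eval z (MvPolynomial.pderiv 1 p) = 0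

open Polynomial

theorem Polynomial.exists_C_mem_span_pair_of_irreducible {R : Type*} [CommRing R] [IsDomain R]
    [IsGCDMonoid R] {P Q : R[X]} (hP : Irreducible P) (hPQ : ¬ P ∣ Q) :
    ∃ r ≠ 0, C r ∈ Ideal.span {P, Q} := by
  by_cases hdeg : P.natDegree = 0
  · rw [eq_C_of_natDegree_eq_zero hdeg] at hP ⊢
    exact ⟨_, fun h ↦ hP.ne_zero (by rw [h, C_0]), Ideal.subset_span (Set.mem_insert _ _)⟩
  let φ := algebraMap R (FractionRing R)
  have hφ : Function.Injective φ := IsFractionRing.injective R (FractionRing R)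
  have hprim := hP.isPrimitive hdeg
  have hcop : IsCoprime (P.map φ) (Q.map φ) :=
    (hprim.irreducible_iff_irreducible_map_fraction_map.mp hP).coprime_iff_not_dvd.mpr
      fun h ↦ hPQ (hprim.dvd_of_fraction_map_dvd_fraction_map h)
  obtain ⟨a, b, -, -, hab⟩ := exists_mul_add_mul_eq_C_resultant P Q le_rfl le_rfl (.inl hdeg)
  refine ⟨resultant P Q, fun h ↦ resultant_ne_zero _ _ hcop ?_,
    Ideal.mem_span_pair.mpr ⟨a, b, by rw [← hab]; ring⟩⟩
  rw [natDegree_map_eq_of_injective hφ, natDegree_map_eq_of_injective hφ, resultant_map_map, h,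
    map_zero]

theorem Polynomial.Bivariate.equivMvPolynomial_C {R : Type*} [CommSemiring R] (r : R[X]) :
    equivMvPolynomial R (C r) = aeval (MvPolynomial.X 0) r := by
  rw [← equivMvPolynomial_C_X, aeval_algHom_apply]
  congr 1
  induction r using Polynomial.induction_on' <;> simp_all [← C_mul_X_pow_eq_monomial]

namespace MvPolynomial

variable {σ R k : Type*}

section Calculus

variable [CommSemiring R]

theorem derivative_aeval [Fintype σ] (γ : σ → R[X]) (p : MvPolynomial σ R) :
    derivative (aeval γ p) = ∑ i, aeval γ (pderiv i p) * derivative (γ i) := by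
  classical
  induction p using MvPolynomial.induction_on with
  | C a => simp
  | add p q hp hq => simp only [map_add, hp, hq, add_mul, Finset.sum_add_distrib]
  | mul_X p i hp =>
    simp only [map_mul, aeval_X, derivative_mul, hp, Derivation.leibniz, pderiv_X, smul_eq_mul,
      map_add, add_mul, Finset.sum_add_distrib, Finset.sum_mul, Pi.single_apply,
      apply_ite (aeval γ), map_zero, mul_ite, mul_one, mul_zero, ite_mul, zero_mul,
      Finset.sum_ite_eq, Finset.mem_univ, if_true]
    rw [add_comm]
    exact congrArg₂ _ rfl (Finset.sum_congr rfl fun _ _ ↦ by ring)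

theorem eval_aeval (γ : σ → R[X]) (p : MvPolynomial σ R) (t : R) :
    (aeval γ p).eval t = eval (fun i ↦ (γ i).eval t) p := by
  rw [← coe_aeval_eq_eval, ← Polynomial.coe_aeval_eq_eval, comp_aeval_apply]
  rfl

theorem totalDegree_pderiv_lt {p : MvPolynomial σ R} {i : σ} (h : pderiv i p ≠ 0) :
    (pderiv i p).totalDegree < p.totalDegree := by
  obtain ⟨m, hm, hdeg⟩ := Finset.exists_mem_eq_sup _ (support_nonempty.mpr h)
    fun s ↦ s.sum fun _ e ↦ e
  have hcoeff : m + Finsupp.single i 1 ∈ p.support := by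
    rw [mem_support_iff, coeff_pderiv] at hm
    exact mem_support_iff.mpr (left_ne_zero_of_mul hm)
  have := le_totalDegree hcoeff
  rw [Finsupp.sum_add_index' (fun _ ↦ rfl) fun _ _ _ ↦ rfl, Finsupp.sum_single_index rfl] at this
  rw [totalDegree, hdeg]
  omega

end Calculus

theorem not_dvd_pderiv [CommRing R] [IsDomain R] {p : MvPolynomial σ R} {i : σ}
    (h : pderiv i p ≠ 0) : ¬ p ∣ pderiv i p := fun hdvd ↦
  (totalDegree_pderiv_lt h).not_ge (totalDegree_le_of_dvd_of_isDomain hdvd h)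

theorem eq_C_of_forall_pderiv_eq_zero [CommRing R] [IsDomain R] [CharZero R]
    {p : MvPolynomial σ R} (h : ∀ i, pderiv i p = 0) : p = C (coeff 0 p) := by
  classical
  ext m
  rw [coeff_C]
  split_ifs with hm
  · rw [hm]
  obtain ⟨i, hi⟩ : ∃ i, m i ≠ 0 := by
    by_contra! hall
    exact hm (Finsupp.ext hall).symm
  have hsplit : m - Finsupp.single i 1 + Finsupp.single i 1 = m :=
    tsub_add_cancel_of_le (Finsupp.single_le_iff.mpr (Nat.one_le_iff_ne_zero.mpr hi))
  have := coeff_pderiv (i := i) p (m - Finsupp.single i 1)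
  rw [h, coeff_zero, hsplit] at this
  exact (mul_eq_zero.mp this.symm).resolve_right (Nat.cast_add_one_ne_zero _)

theorem exists_pderiv_ne_zero_of_irreducible [Field k] [CharZero k] {p : MvPolynomial σ k}
    (hp : Irreducible p) : ∃ i, pderiv i p ≠ 0 := by
  by_contra! h
  have hC := eq_C_of_forall_pderiv_eq_zero h
  have hc : coeff 0 p ≠ 0 := fun hc ↦ hp.ne_zero (by rw [hC, hc, C_0])
  exact hp.not_isUnit (hC ▸ hc.isUnit.map C)

section Elimination

variable [Field k]

theorem exists_aeval_X_zero_mem_span_pair {p q : MvPolynomial (Fin 2) k} (hp : Irreducible p)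
    (hpq : ¬ p ∣ q) : ∃ d : k[X], d ≠ 0 ∧ Polynomial.aeval (X 0) d ∈ Ideal.span {p, q} := by
  let e := Bivariate.equivMvPolynomial k
  obtain ⟨d, hd, hmem⟩ := exists_C_mem_span_pair_of_irreducible (P := e.symm p) (Q := e.symm q)
    ((MulEquiv.irreducible_iff e.symm.toMulEquiv).mpr hp) (by rwa [map_dvd_iff])
  refine ⟨d, hd, ?_⟩
  have := Ideal.mem_map_of_mem e hmem
  rwa [Ideal.map_span, Set.image_pair, e.apply_symm_apply, e.apply_symm_apply,
    Bivariate.equivMvPolynomial_C] at this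

theorem exists_eq_C_of_aeval_eq_zero {p q : MvPolynomial (Fin 2) k} (hp : Irreducible p)
    (hpq : ¬ p ∣ q) {γ : Fin 2 → k[X]} (hγp : aeval γ p = 0) (hγq : aeval γ q = 0) (i : Fin 2) :
    ∃ c, γ i = Polynomial.C c := by
  suffices key : ∀ {p q : MvPolynomial (Fin 2) k} {γ : Fin 2 → k[X]}, Irreducible p → ¬ p ∣ q →
      aeval γ p = 0 → aeval γ q = 0 → ∃ c, γ 0 = Polynomial.C c by
    fin_cases i
    · exact key hp hpq hγp hγq
    · let σ := renameEquiv k (Equiv.swap (0 : Fin 2) 1)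
      have hγ : γ ∘ Equiv.swap 0 1 ∘ Equiv.swap 0 1 = γ := by ext i; simp
      refine key (p := σ p) (q := σ q) (γ := γ ∘ Equiv.swap 0 1)
        ((MulEquiv.irreducible_iff σ.toMulEquiv).mpr hp) (by rwa [map_dvd_iff]) ?_ ?_
      all_goals simpa [σ, aeval_rename, Function.comp_assoc, hγ]
  intro p q γ hp hpq hγp hγq
  obtain ⟨d, hd, hmem⟩ := exists_aeval_X_zero_mem_span_pair hp hpq
  have hker : Ideal.span {p, q} ≤ RingHom.ker (aeval γ) := by
    rw [Ideal.span_le, Set.pair_subset_iff]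
    exact ⟨hγp, hγq⟩
  have hcomp : d.comp (γ 0) = 0 := by
    simpa [comp_eq_aeval, ← Polynomial.aeval_algHom_apply] using hker hmem
  exact ⟨_, ((comp_eq_zero_iff.mp hcomp).resolve_left hd).2⟩

end Elimination

section Pencil

variable [CommRing k] {γ : σ → k[X]}

theorem aeval_add_X_mul_eq_zero [IsDomain k] [Infinite k] {a b : MvPolynomial σ k}
    (h : ∀ t, eval (fun i ↦ (γ i).eval t) (a + C t * b) = 0) :
    aeval γ a + Polynomial.X * aeval γ b = 0 :=
  Polynomial.funext fun t ↦ by simpa [eval_aeval] using h t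

theorem aeval_eq_zero_of_pencil [Fintype σ] {g h : MvPolynomial σ k}
    (hγ : aeval γ g + Polynomial.X * aeval γ h = 0)
    (hγ' : ∀ i, aeval γ (pderiv i g) + Polynomial.X * aeval γ (pderiv i h) = 0) :
    aeval γ h = 0 :=
  calc aeval γ h
      = derivative (aeval γ g + Polynomial.X * aeval γ h)
        - ∑ i, (aeval γ (pderiv i g) + Polynomial.X * aeval γ (pderiv i h)) * derivative (γ i) := by
        simp only [derivative_add, derivative_mul, derivative_X, derivative_aeval, add_mul,
          Finset.sum_add_distrib, Finset.mul_sum, mul_assoc]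
        ring
    _ = 0 := by simp [hγ, hγ']

theorem aeval_pderiv_eq_zero_of_eq_C_mul [IsDomain k] {g h p : MvPolynomial σ k}
    {t₀ b : k} {i : σ} (hp : g + C t₀ * h = p) (hb : h = C b * p)
    (hγ' : aeval γ (pderiv i g) + Polynomial.X * aeval γ (pderiv i h) = 0) :
    aeval γ (pderiv i p) = 0 := by
  have hfactor :
      (Polynomial.C (1 - t₀ * b) + Polynomial.X * Polynomial.C b) * aeval γ (pderiv i p) = 0 := by
    rw [← hγ', eq_sub_of_add_eq hp, hb]
    simp only [map_sub, map_mul, pderiv_C_mul, aeval_C, Polynomial.algebraMap_eq, map_one]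
    ring
  refine (mul_eq_zero.mp hfactor).resolve_left fun h0 ↦ ?_
  have := congrArg (Polynomial.eval t₀) h0
  simp only [Polynomial.eval_mul, Polynomial.eval_add, Polynomial.eval_C, Polynomial.eval_X,
    Polynomial.eval_zero] at this
  exact one_ne_zero (by linear_combination this)

end Pencil

theorem exists_eq_C_mul_of_dvd [Field k] {g h : MvPolynomial σ k} {t₁ t₂ : k} (ht : t₁ ≠ t₂)
    (hirr₁ : Irreducible (g + C t₁ * h)) (hirr₂ : Irreducible (g + C t₂ * h))
    (hdvd : g + C t₁ * h ∣ g + C t₂ * h) : ∃ b, h = C b * (g + C t₁ * h) := by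
  obtain ⟨u, hu⟩ := hirr₁.associated_of_dvd hirr₂ hdvd
  obtain ⟨c, -, hc⟩ := isUnit_iff_eq_C_of_isReduced.mp u.isUnit
  rw [hc] at hu
  have hinv : C (t₂ - t₁)⁻¹ * (C t₂ - C t₁) = (1 : MvPolynomial σ k) := by
    rw [← C_sub, ← C_mul, inv_mul_cancel₀ (sub_ne_zero.mpr ht.symm), C_1]
  refine ⟨(t₂ - t₁)⁻¹ * (c - 1), ?_⟩
  rw [C_mul, C_sub, C_1]
  linear_combination (-h) * hinv - C (t₂ - t₁)⁻¹ * hu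

theorem exists_eq_C_of_pencil [Field k] [CharZero k] {g h : MvPolynomial (Fin 2) k}
    {γ : Fin 2 → k[X]} (hgen : {t : k | ¬ Irreducible (g + C t * h)}.Finite)
    (hγ : aeval γ g + Polynomial.X * aeval γ h = 0)
    (hγ' : ∀ i, aeval γ (pderiv i g) + Polynomial.X * aeval γ (pderiv i h) = 0) (i : Fin 2) :
    ∃ c, γ i = Polynomial.C c := by
  have hh := aeval_eq_zero_of_pencil hγ hγ'
  have hmem : ∀ t, aeval γ (g + C t * h) = 0 := fun t ↦ by
    simpa [hh] using hγ
  have hirr := hgen.infinite_compl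
  simp only [Set.compl_ofPred, not_not] at hirr
  obtain ⟨t₁, hirr₁, t₂, hirr₂, ht⟩ := hirr.nontrivial
  by_cases hdvd : g + C t₁ * h ∣ g + C t₂ * h
  · obtain ⟨b, hb⟩ := exists_eq_C_mul_of_dvd ht hirr₁ hirr₂ hdvd
    obtain ⟨j, hj⟩ := exists_pderiv_ne_zero_of_irreducible hirr₁
    exact exists_eq_C_of_aeval_eq_zero hirr₁ (not_dvd_pderiv hj) (hmem t₁)
      (aeval_pderiv_eq_zero_of_eq_C_mul rfl hb (hγ' j)) i
  · exact exists_eq_C_of_aeval_eq_zero hirr₁ hdvd (hmem t₁) (hmem t₂) i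

theorem aeval_pencil_eq_zero_of_singAt {g h : MvPolynomial (Fin 2) ℂ} {γ : Fin 2 → ℂ[X]}
    (hsec : ∀ t : ℂ, SingAt (g + MvPolynomial.C t * h) fun i ↦ (γ i).eval t) :
    aeval γ g + Polynomial.X * aeval γ h = 0 ∧
      ∀ i, aeval γ (pderiv i g) + Polynomial.X * aeval γ (pderiv i h) = 0 := by
  refine ⟨aeval_add_X_mul_eq_zero fun t ↦ (hsec t).1, fun i ↦ aeval_add_X_mul_eq_zero fun t ↦ ?_⟩
  rw [← pderiv_C_mul, ← map_add]
  fin_cases i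
  exacts [(hsec t).2.1, (hsec t).2.2]

end MvPolynomial

theorem pencil_moving_singularities_constant_general
    (g h : MvPolynomial (Fin 2) ℂ)
    (hgen : {t : ℂ | ¬ Irreducible (g + MvPolynomial.C t * h)}.Finite)
    (u v : Polynomial ℂ)
    (hsec : ∀ t : ℂ, SingAt (g + MvPolynomial.C t * h) ![u.eval t, v.eval t]) :
    ∃ z₀ : Fin 2 → ℂ, ∀ t : ℂ, ![u.eval t, v.eval t] = z₀ := by
  have heval : ∀ t : ℂ, (fun i ↦ (![u, v] i).eval t) = ![u.eval t, v.eval t] := fun t ↦ by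
    ext i
    fin_cases i <;> rfl
  have hsec' : ∀ t : ℂ, SingAt (g + MvPolynomial.C t * h) fun i ↦ (![u, v] i).eval t :=
    fun t ↦ heval t ▸ hsec t
  obtain ⟨hγ, hγ'⟩ := MvPolynomial.aeval_pencil_eq_zero_of_singAt hsec'
  choose c hc using MvPolynomial.exists_eq_C_of_pencil hgen hγ hγ'
  refine ⟨c, fun t ↦ ?_⟩
  rw [← heval]
  ext i
  simp [hc]

/-- Moving singular points of a generically irreducible pencil are constant.
Let `C_t` be the pencil of plane curves of degree `n` cut out by
`f(x,y;t) = g + t·h`, whose generic member is irreducible (hence reduced).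
Then any algebraic section `t ↦ (u(t), v(t))` of the incidence variety
`F = {(t,z) : z ∈ Sing(C_t)}` dominating the parameter line is constant; i.e.
every one-dimensional component of `F` dominating `L` is of the form
`L × {z₀}`. -/
theorem pencil_moving_singularities_constant (n : ℕ) (hn : 1 ≤ n)
    (g h : MvPolynomial (Fin 2) ℂ) (hh : h ≠ 0)
    (hdegg : g.totalDegree ≤ n) (hdegh : h.totalDegree ≤ n)
    (hgen : {t : ℂ | ¬ Irreducible (g + MvPolynomial.C t * h)}.Finite)
    (u v : Polynomial ℂ)
    (hsec : ∀ t : ℂ, SingAt (g + MvPolynomial.C t * h) ![u.eval t, v.eval t]) :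
    ∃ z₀ : Fin 2 → ℂ, ∀ t : ℂ, ![u.eval t, v.eval t] = z₀ :=
  pencil_moving_singularities_constant_general g h hgen u v hsec
end
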